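/- arXiv:1911.03581 — 2 statements merged into one kernel-verified Lean document; each statement's English description precedes it below -/
import Mathlib

section
/- Let g : ℝ → ℝ be an odd, nondecreasing, continuous function, let G(s) := ∫₀ˢ g(r) dr, and let α₁, α₂ > 0 be constants such that α₁ s g(s) ≤ G(s) ≤ α₂ s g(s) for all s ∈ ℝ. Then for all a, b ∈ ℝ, −a g(b) ≤ (1 − α₁) b g(b) + α₂ a g(a). -/
/-- For an odd nondecreasing continuous `g` with antiderivative `G` satisfying
`α₁ s g(s) ≤ G(s) ≤ α₂ s g(s)`, one has `−a g(b) ≤ (1−α₁) b g(b) + α₂ a g(a)`. -/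
theorem stmt_3 (g : ℝ → ℝ) (hodd : ∀ s, g (-s) = -g s) (hmono : Monotone g)
    (hcont : Continuous g) (G : ℝ → ℝ) (hG : ∀ s, G s = ∫ r in (0:ℝ)..s, g r)
    (α₁ α₂ : ℝ) (hα₁ : 0 < α₁) (hα₂ : 0 < α₂)
    (hlow : ∀ s, α₁ * (s * g s) ≤ G s) (hupp : ∀ s, G s ≤ α₂ * (s * g s)) :
    ∀ a b : ℝ, -(a * g b) ≤ (1 - α₁) * (b * g b) + α₂ * (a * g a) := by
  intro a b
  have hint : ∀ x y : ℝ, IntervalIntegrable g MeasureTheory.volume x y :=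
    fun x y => hcont.intervalIntegrable x y
  -- G is even
  have hGeven : G (-a) = G a := by
    rw [hG, hG]
    have h1 : ∀ x, g x = -(g (-x)) := by
      intro x; rw [hodd x]; ring
    calc (∫ r in (0:ℝ)..(-a), g r) = ∫ r in (0:ℝ)..(-a), -(g (-r)) := by
          simp_rw [← h1]
      _ = -∫ r in (0:ℝ)..(-a), g (-r) := by rw [intervalIntegral.integral_neg]
      _ = -∫ r in (-(-a))..(-(0:ℝ)), g r := by rw [intervalIntegral.integral_comp_neg]
      _ = ∫ r in (0:ℝ)..a, g r := by
          rw [intervalIntegral.integral_symm]; norm_num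
  -- G b - G (-a) = ∫ in (-a)..b
  have hsplit : G b - G (-a) = ∫ r in (-a)..b, g r := by
    have := intervalIntegral.integral_add_adjacent_intervals (hint 0 (-a)) (hint (-a) b)
    rw [hG, hG]
    linarith [this]
  -- key: ∫ in (-a)..b ≤ (b + a) * g b
  have hkey : (∫ r in (-a)..b, g r) ≤ (b + a) * g b := by
    rcases le_total (-a) b with h | h
    · have hmono' : ∀ x ∈ Set.Icc (-a) b, g x ≤ g b := fun x hx => hmono hx.2
      have := intervalIntegral.integral_mono_on h (hint (-a) b)
        (intervalIntegrable_const (c := g b)) hmono'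
      rw [intervalIntegral.integral_const] at this
      simpa [smul_eq_mul, sub_neg_eq_add] using this
    · have hmono' : ∀ x ∈ Set.Icc b (-a), g b ≤ g x := fun x hx => hmono hx.1
      have := intervalIntegral.integral_mono_on h
        (intervalIntegrable_const (c := g b)) (hint b (-a)) hmono'
      rw [intervalIntegral.integral_const, intervalIntegral.integral_symm] at this
      simp only [smul_eq_mul] at this
      nlinarith [this]
  have h1 := hlow b
  have h2 := hupp a
  rw [hGeven] at hsplit
  nlinarith [hsplit, hkey]
end

section
/- Let τ > 0 and let z : [0, 1] × ℝ → ℝ be continuously differentiable and satisfy the transport equation τ ∂_t z(ϱ, t) + ∂_ϱ z(ϱ, t) = 0 on [0,1] × ℝ, and let G : ℝ → ℝ be continuously differentiable. Define Υ(t) := ∫₀¹ e^{−2τϱ} G(z(ϱ, t)) dϱ. Then for every t ∈ ℝ, Υ'(t) = −2 Υ(t) − (1/τ) ( e^{−2τ} G(z(1, t)) − G(z(0, t)) ). -/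
open Real intervalIntegral

/-!
Along the characteristics `s ↦ (s, c + τ s)` the transport equation makes `z` constant, so
`z(ϱ, t) = z(0, t − τϱ)` and `Υ` is a delay integral of `g = G ∘ z(0, ·)`. The substitution
`u = t − τϱ` gives `Υ(t) = τ⁻¹ e^{−2t} ∫_{t−τ}^{t} e^{2u} g(u) du`, which is differentiated by the
product rule and the fundamental theorem of calculus.
-/

section Transport

variable {z : ℝ → ℝ → ℝ}

theorem hasDerivAt_fst_of_differentiableAt_uncurry {ϱ t : ℝ}
    (hz : DifferentiableAt ℝ (fun q : ℝ × ℝ => z q.1 q.2) (ϱ, t)) :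
    HasDerivAt (z · t) (fderiv ℝ (fun q : ℝ × ℝ => z q.1 q.2) (ϱ, t) (1, 0)) ϱ :=
  hz.hasFDerivAt.comp_hasDerivAt (𝕜 := ℝ) (f := fun s => (s, t)) ϱ
    ((hasDerivAt_id' ϱ).prodMk (hasDerivAt_const ϱ t))

theorem hasDerivAt_snd_of_differentiableAt_uncurry {ϱ t : ℝ}
    (hz : DifferentiableAt ℝ (fun q : ℝ × ℝ => z q.1 q.2) (ϱ, t)) :
    HasDerivAt (z ϱ ·) (fderiv ℝ (fun q : ℝ × ℝ => z q.1 q.2) (ϱ, t) (0, 1)) t :=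
  hz.hasFDerivAt.comp_hasDerivAt (𝕜 := ℝ) (f := fun s => (ϱ, s)) t
    ((hasDerivAt_const t ϱ).prodMk (hasDerivAt_id' t))

theorem hasDerivAt_zero_along_characteristic {τ c s : ℝ}
    (hz : DifferentiableAt ℝ (fun q : ℝ × ℝ => z q.1 q.2) (s, c + τ * s))
    (hpde : τ * deriv (z s ·) (c + τ * s) + deriv (z · (c + τ * s)) s = 0) :
    HasDerivAt (fun s' => z s' (c + τ * s')) 0 s := by
  set L := fderiv ℝ (fun q : ℝ × ℝ => z q.1 q.2) (s, c + τ * s)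
  have hline : HasDerivAt (fun s' : ℝ => (s', c + τ * s')) ((1 : ℝ), τ) s :=
    (hasDerivAt_id s).prodMk (by simpa using ((hasDerivAt_id s).const_mul τ).const_add c)
  have hL : L ((1 : ℝ), τ) = τ * L (0, 1) + L (1, 0) := by
    rw [show ((1 : ℝ), τ) = ((1 : ℝ), (0 : ℝ)) + τ • ((0 : ℝ), (1 : ℝ)) by simp,
      map_add, map_smul, smul_eq_mul, add_comm]
  rw [(hasDerivAt_snd_of_differentiableAt_uncurry hz).deriv,
    (hasDerivAt_fst_of_differentiableAt_uncurry hz).deriv, ← hL] at hpde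
  exact hpde ▸ hz.hasFDerivAt.comp_hasDerivAt (f := fun s' : ℝ => (s', c + τ * s')) s hline

theorem eq_shift_of_transport {τ a b ϱ : ℝ}
    (hz : Differentiable ℝ (fun q : ℝ × ℝ => z q.1 q.2))
    (hpde : ∀ ϱ ∈ Set.Icc a b, ∀ t : ℝ,
      τ * deriv (fun t' => z ϱ t') t + deriv (fun ϱ' => z ϱ' t) ϱ = 0)
    (hϱ : ϱ ∈ Set.Icc a b) (t : ℝ) :
    z ϱ t = z a (t - τ * (ϱ - a)) := by
  set c := t - τ * ϱ
  have hconst := constant_of_has_deriv_right_zero (f := fun s => z s (c + τ * s))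
    (a := a) (b := b) ?_ ?_ ϱ hϱ
  · rwa [show t - τ * (ϱ - a) = c + τ * a by ring, show t = c + τ * ϱ by ring]
  · exact (hz.continuous.comp (f := fun s : ℝ => (s, c + τ * s)) (by fun_prop)).continuousOn
  · intro s hs
    exact (hasDerivAt_zero_along_characteristic (hz _)
      (hpde s (Set.Ico_subset_Icc_self hs) _)).hasDerivWithinAt

end Transport

theorem integral_exp_mul_comp_sub (g : ℝ → ℝ) {τ : ℝ} (hτ : τ ≠ 0) (k r : ℝ) :
    ∫ ϱ in (0 : ℝ)..1, exp (-k * τ * ϱ) * g (r - τ * ϱ)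
      = τ⁻¹ * exp (-k * r) * ∫ u in r - τ..r, exp (k * u) * g u := by
  have hsplit : ∀ ϱ, exp (-k * τ * ϱ) * g (r - τ * ϱ)
      = exp (-k * r) * (exp (k * (r - τ * ϱ)) * g (r - τ * ϱ)) := fun ϱ => by
    rw [← mul_assoc, ← exp_add]; ring_nf
  simp_rw [hsplit, integral_const_mul, integral_comp_sub_mul (fun u => exp (k * u) * g u) hτ r,
    mul_one, mul_zero, sub_zero, smul_eq_mul]
  ring

theorem hasDerivAt_integral_exp_mul_comp_sub {g : ℝ → ℝ} (hg : Continuous g) {τ : ℝ}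
    (hτ : τ ≠ 0) (k r : ℝ) :
    HasDerivAt (fun s => ∫ ϱ in (0 : ℝ)..1, exp (-k * τ * ϱ) * g (s - τ * ϱ))
      (-k * (∫ ϱ in (0 : ℝ)..1, exp (-k * τ * ϱ) * g (r - τ * ϱ))
        - τ⁻¹ * (exp (-k * τ) * g (r - τ) - g r)) r := by
  have hF : Continuous fun u => exp (k * u) * g u := by fun_prop
  set H : ℝ → ℝ := fun x => ∫ u in (0 : ℝ)..x, exp (k * u) * g u
  have hH : ∀ x, HasDerivAt H (exp (k * x) * g x) x := fun x =>
    (hF.integral_hasStrictDerivAt 0 x).hasDerivAt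
  have hclosed : ∀ s, ∫ ϱ in (0 : ℝ)..1, exp (-k * τ * ϱ) * g (s - τ * ϱ)
      = τ⁻¹ * exp (-k * s) * (H s - H (s - τ)) := fun s => by
    rw [integral_exp_mul_comp_sub g hτ k s,
      integral_interval_sub_left (hF.intervalIntegrable _ _) (hF.intervalIntegrable _ _)]
  simp_rw [hclosed]
  refine ((((hasDerivAt_id' r).const_mul (-k)).exp.const_mul τ⁻¹).fun_mul
    ((hH r).fun_sub ((hH (r - τ)).comp_sub_const r τ))).congr_deriv ?_
  have hexp₀ : exp (-k * r) * exp (k * r) = 1 := by rw [← exp_add]; simp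
  have hexpτ : exp (-k * r) * exp (k * (r - τ)) = exp (-k * τ) := by rw [← exp_add]; ring_nf
  linear_combination (τ⁻¹ * g r) * hexp₀ - (τ⁻¹ * g (r - τ)) * hexpτ

/-- For `Υ(t) = ∫₀¹ e^{−2τϱ} G(z(ϱ,t)) dϱ` with `z` a `C¹` solution of
`τ ∂_t z + ∂_ϱ z = 0` on `[0,1] × ℝ`,
`Υ'(t) = −2Υ(t) − (1/τ)(e^{−2τ} G(z(1,t)) − G(z(0,t)))`. -/
theorem stmt_12 (τ : ℝ) (hτ : 0 < τ)
    (z : ℝ → ℝ → ℝ) (hz : ContDiff ℝ 1 fun q : ℝ × ℝ => z q.1 q.2)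
    (hpde : ∀ ϱ ∈ Set.Icc (0:ℝ) 1, ∀ t : ℝ,
      τ * deriv (fun t' => z ϱ t') t + deriv (fun ϱ' => z ϱ' t) ϱ = 0)
    (G : ℝ → ℝ) (hG : ContDiff ℝ 1 G)
    (Υ : ℝ → ℝ)
    (hΥ : ∀ r : ℝ, Υ r = ∫ ϱ in (0:ℝ)..1, Real.exp (-2 * τ * ϱ) * G (z ϱ r))
    (t : ℝ) :
    deriv Υ t
      = -2 * Υ t - (1 / τ) * (Real.exp (-2 * τ) * G (z 1 t) - G (z 0 t)) := by
  have hshift : ∀ ϱ ∈ Set.Icc (0 : ℝ) 1, ∀ r, z ϱ r = z 0 (r - τ * ϱ) := fun ϱ hϱ r => by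
    simpa using eq_shift_of_transport (hz.differentiable one_ne_zero) hpde hϱ r
  have hΥ_delay : Υ = fun r => ∫ ϱ in (0 : ℝ)..1, exp (-2 * τ * ϱ) * G (z 0 (r - τ * ϱ)) :=
    funext fun r => (hΥ r).trans <| integral_congr fun ϱ hϱ => by
      rw [Set.uIcc_of_le zero_le_one] at hϱ
      simp only [hshift ϱ hϱ r]
  have hg : Continuous fun u => G (z 0 u) :=
    hG.continuous.comp (hz.continuous.comp (f := fun u : ℝ => ((0 : ℝ), u)) (by fun_prop))
  rw [hΥ_delay, (hasDerivAt_integral_exp_mul_comp_sub hg hτ.ne' 2 t).deriv,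
    hshift 1 ⟨zero_le_one, le_rfl⟩ t, mul_one, one_div]
end
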